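/- arXiv:2306.02990 — 8 statements merged into one kernel-verified Lean document; each statement's English description precedes it below -/
import Mathlib

section
/- Let K ≥ 2, q ∈ (0,1], q_min ∈ (0, q], and χ = 1 − (1 − q_min)^K. For S ranging over subsets of {1,…,K}, define α_k = ∑_{S ∋ k} (1/|S|)·q^{|S|}(1−q)^{K−|S|} / (1 − (1−q)^K), β_k = ∑_{S ∋ k} (1/|S|²)·q^{|S|}(1−q)^{K−|S|} / (1 − (1−q)^K), γ_k = ∑_{S ∋ k, |S| ≥ 2} (2/|S|)·(1−q)^{K−|S|} / (1 − (1−q)^K − Kq(1−q)^{K−1}). Let η > 0, L > 0, and for each k let δ_k > 0, σ_k² ≥ 0, Λ_k² ≥ 0, and set G = η·(∑_k α_k²)·∑_k (σ_k²/δ_k + Λ_k²) + L·η²·∑_k β_k·(σ_k²/δ_k + 2Λ_k²) + 2L·η²·q²·∑_k γ_k·Λ_k². Then G ≤ (η/K)·∑_k (σ_k²/δ_k + Λ_k²) + (2Lη²/(K²·χ·q))·∑_k (σ_k²/δ_k + 2Λ_k²) + (4Lη²/(K·q^{K−2}))·∑_k Λ_k². -/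
open Finset

private lemma sum_card_filter_mem {K : ℕ} (k : Fin K) (f : ℕ → ℝ) :
    ∑ S ∈ (Finset.univ : Finset (Fin K)).powerset.filter (fun S => k ∈ S), f S.card
      = ∑ s ∈ Finset.range K, ((K-1).choose s : ℝ) * f (s+1) := by
  have hK : 1 ≤ K := k.pos
  have h1 : ∑ S ∈ (Finset.univ : Finset (Fin K)).powerset.filter (fun S => k ∈ S), f S.card
      = ∑ T ∈ ((Finset.univ : Finset (Fin K)).erase k).powerset, f (T.card + 1) := by
    refine Finset.sum_nbij' (i := fun S => S.erase k) (j := fun T => insert k T)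
      ?_ ?_ ?_ ?_ ?_
    · intro S hS
      simp only [Finset.mem_powerset]
      exact Finset.erase_subset_erase _ (Finset.subset_univ S)
    · intro T hT
      simp only [Finset.mem_filter, Finset.mem_powerset]
      exact ⟨Finset.subset_univ _, Finset.mem_insert_self _ _⟩
    · intro S hS
      simp only [Finset.mem_filter] at hS
      exact Finset.insert_erase hS.2
    · intro T hT
      simp only [Finset.mem_powerset, Finset.subset_erase] at hT
      exact Finset.erase_insert hT.2
    · intro S hS
      simp only [Finset.mem_filter] at hS
      rw [Finset.card_erase_of_mem hS.2]
      have hpos : 0 < S.card := Finset.card_pos.mpr ⟨k, hS.2⟩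
      congr 1
      omega
  rw [h1, Finset.sum_powerset_apply_card (fun m => f (m+1))]
  have hc : ((Finset.univ : Finset (Fin K)).erase k).card = K - 1 := by
    rw [Finset.card_erase_of_mem (Finset.mem_univ k), Finset.card_univ, Fintype.card_fin]
  rw [hc]
  have h2 : K - 1 + 1 = K := by omega
  rw [h2]
  exact Finset.sum_congr rfl fun s _ => by rw [nsmul_eq_mul]

private lemma binom_sum (q : ℝ) (K : ℕ) :
    ∑ t ∈ Finset.range (K+1), (K.choose t : ℝ) * q^t * (1-q)^(K-t) = 1 := by
  calc ∑ t ∈ Finset.range (K+1), (K.choose t : ℝ) * q^t * (1-q)^(K-t)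
      = ∑ t ∈ Finset.range (K+1), q^t * (1-q)^(K-t) * (K.choose t : ℝ) :=
        Finset.sum_congr rfl fun t _ => by ring
    _ = (q + (1-q))^K := (add_pow q (1-q) K).symm
    _ = 1 := by norm_num

private lemma choose_div_succ (K s : ℕ) (hK : 1 ≤ K) :
    ((K-1).choose s : ℝ) / (s+1) = (K.choose (s+1) : ℝ) / K := by
  have h := Nat.add_one_mul_choose_eq (K-1) s
  have h2 : K - 1 + 1 = K := by omega
  rw [h2] at h
  have h3 : (K : ℝ) * ((K-1).choose s : ℝ) = (K.choose (s+1) : ℝ) * (s+1) := by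
    exact_mod_cast congrArg (Nat.cast : ℕ → ℝ) h
  have hs : (0:ℝ) < (s:ℝ) + 1 := by positivity
  have hKr : (0:ℝ) < K := by exact_mod_cast hK
  rw [div_eq_div_iff (by linarith) (by linarith)]
  linarith

private lemma binom_tail (q : ℝ) (K : ℕ) :
    ∑ s ∈ Finset.range K, (K.choose (s+1) : ℝ) * q^(s+1) * (1-q)^(K-(s+1))
      = 1 - (1-q)^K := by
  have hb := binom_sum q K
  rw [Finset.sum_range_succ'] at hb
  simp only [Nat.choose_zero_right, Nat.cast_one, pow_zero, one_mul, mul_one,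
    Nat.sub_zero] at hb
  linarith

private lemma binom_tail2 (q : ℝ) (K : ℕ) :
    ∑ s ∈ Finset.range K, ((K+1).choose (s+2) : ℝ) * q^(s+2) * (1-q)^(K+1-(s+2))
      = 1 - (1-q)^(K+1) - ((K:ℝ)+1) * q * (1-q)^K := by
  have hb := binom_sum q (K+1)
  rw [Finset.sum_range_succ', Finset.sum_range_succ'] at hb
  norm_num at hb
  push_cast at hb
  have he : ∀ x ∈ Finset.range K,
      ((K+1).choose (x+2) : ℝ) * q^(x+2) * (1-q)^(K+1-(x+2))
        = ((K+1).choose (x+1+1) : ℝ) * q^(x+1+1) * (1-q)^(K-(x+1)) := by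
    intro x _
    have hsub : K + 1 - (x+2) = K - (x+1) := by omega
    rw [hsub]
  rw [Finset.sum_congr rfl he]
  linarith

private lemma alpha_num {K : ℕ} (hK : 1 ≤ K) (q : ℝ) (k : Fin K) :
    ∑ S ∈ (Finset.univ : Finset (Fin K)).powerset.filter (fun S => k ∈ S),
        (1 / (S.card : ℝ)) * q ^ S.card * (1 - q) ^ (K - S.card)
      = (1 - (1-q)^K) / K := by
  rw [sum_card_filter_mem k (fun n => (1 / (n : ℝ)) * q ^ n * (1 - q) ^ (K - n))]
  have hstep : ∀ s ∈ Finset.range K,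
      ((K-1).choose s : ℝ) * ((1 / (((s+1 : ℕ)) : ℝ)) * q ^ (s+1) * (1 - q) ^ (K - (s+1)))
        = (1 / K) * ((K.choose (s+1) : ℝ) * q^(s+1) * (1-q)^(K-(s+1))) := by
    intro s _
    have h := choose_div_succ K s hK
    have hrw : ((K-1).choose s : ℝ) * ((1 / (((s:ℝ))+1)) * q ^ (s+1) * (1 - q) ^ (K - (s+1)))
        = (((K-1).choose s : ℝ) / ((s:ℝ)+1)) * (q^(s+1) * (1-q)^(K-(s+1))) := by ring
    push_cast
    rw [hrw, h]
    ring
  rw [Finset.sum_congr rfl hstep, ← Finset.mul_sum, binom_tail]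
  ring

private lemma beta_num_le {K : ℕ} (hK : 1 ≤ K) {q : ℝ} (hq0 : 0 < q) (hq1 : q ≤ 1)
    (k : Fin K) :
    ∑ S ∈ (Finset.univ : Finset (Fin K)).powerset.filter (fun S => k ∈ S),
        (1 / (S.card : ℝ) ^ 2) * q ^ S.card * (1 - q) ^ (K - S.card)
      ≤ 2 / ((K:ℝ) * ((K:ℝ)+1) * q) := by
  have hKr : (0:ℝ) < K := by exact_mod_cast hK
  have hq' : (0:ℝ) ≤ 1 - q := by linarith
  rw [sum_card_filter_mem k (fun n => (1 / (n : ℝ) ^ 2) * q ^ n * (1 - q) ^ (K - n))]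
  have hterm : ∀ s ∈ Finset.range K,
      ((K-1).choose s : ℝ) * ((1 / (((s+1:ℕ)) : ℝ)^2) * q ^ (s+1) * (1 - q) ^ (K - (s+1)))
        ≤ (2 / ((K:ℝ)*((K:ℝ)+1))) * (((K+1).choose (s+2) : ℝ) * q^(s+1) * (1-q)^(K-(s+1))) := by
    intro s hs
    have hX : (0:ℝ) ≤ q^(s+1) * (1-q)^(K-(s+1)) := by positivity
    have h1 := choose_div_succ K s hK
    have h3n := Nat.add_one_mul_choose_eq K (s+1)
    have h3 : ((K:ℝ)+1) * (K.choose (s+1) : ℝ) = ((K+1).choose (s+2) : ℝ) * ((s:ℝ)+2) := by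
      have := congrArg (Nat.cast : ℕ → ℝ) h3n
      push_cast at this
      convert this using 2 <;> push_cast <;> ring
    have hCnn : (0:ℝ) ≤ (K.choose (s+1) : ℝ) := Nat.cast_nonneg _
    have hC'nn : (0:ℝ) ≤ ((K+1).choose (s+2) : ℝ) := Nat.cast_nonneg _
    have hsnn : (0:ℝ) ≤ (s:ℝ) := Nat.cast_nonneg _
    have hcoef : (K.choose (s+1) : ℝ) / ((K:ℝ) * ((s:ℝ)+1))
        ≤ 2 * ((K+1).choose (s+2) : ℝ) / ((K:ℝ) * ((K:ℝ)+1)) := by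
      rw [div_le_div_iff₀ (by positivity) (by positivity)]
      nlinarith [h3, mul_nonneg (mul_nonneg hKr.le hC'nn) hsnn]
    have lhs_eq : ((K-1).choose s : ℝ) * ((1 / (((s:ℝ)+1)) ^2) * q ^ (s+1) * (1 - q) ^ (K - (s+1)))
        = (((K-1).choose s : ℝ) / ((s:ℝ)+1) / ((s:ℝ)+1)) * (q^(s+1) * (1-q)^(K-(s+1))) := by
      have hc : ((s:ℝ)+1) ≠ 0 := by positivity
      rw [div_div, ← sq, div_eq_mul_inv, div_eq_mul_inv, ← one_div, one_div ((((s:ℝ)+1))^2)]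
      ring
    push_cast
    rw [lhs_eq, h1]
    have e2 : (K.choose (s+1) : ℝ) / (K:ℝ) / ((s:ℝ)+1) = (K.choose (s+1) : ℝ) / ((K:ℝ) * ((s:ℝ)+1)) := by
      rw [div_div]
    rw [e2]
    calc (K.choose (s+1) : ℝ) / ((K:ℝ) * ((s:ℝ)+1)) * (q^(s+1) * (1-q)^(K-(s+1)))
        ≤ 2 * ((K+1).choose (s+2) : ℝ) / ((K:ℝ) * ((K:ℝ)+1)) * (q^(s+1) * (1-q)^(K-(s+1))) :=
          mul_le_mul_of_nonneg_right hcoef hX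
      _ = 2 / ((K:ℝ)*((K:ℝ)+1)) * (((K+1).choose (s+2) : ℝ) * q^(s+1) * (1-q)^(K-(s+1))) := by
          ring
  have hsum := Finset.sum_le_sum hterm
  refine le_trans hsum ?_
  rw [← Finset.mul_sum]
  have hq'' : (0:ℝ) ≤ 1 - q := hq'
  have hT : ∑ s ∈ Finset.range K, (((K+1).choose (s+2) : ℝ) * q^(s+1) * (1-q)^(K-(s+1))) ≤ 1/q := by
    rw [le_div_iff₀ hq0, Finset.sum_mul]
    have he : ∀ s ∈ Finset.range K,
        ((K+1).choose (s+2) : ℝ) * q^(s+1) * (1-q)^(K-(s+1)) * q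
          = ((K+1).choose (s+2) : ℝ) * q^(s+2) * (1-q)^(K+1-(s+2)) := by
      intro s hs
      rw [Finset.mem_range] at hs
      have hsub : K + 1 - (s+2) = K - (s+1) := by omega
      rw [hsub]; ring
    rw [Finset.sum_congr rfl he, binom_tail2]
    have h0 : (0:ℝ) ≤ (1-q)^(K+1) := pow_nonneg hq' _
    have h1 : (0:ℝ) ≤ ((K:ℝ)+1) * q * (1-q)^K :=
      mul_nonneg (mul_nonneg (by linarith) hq0.le) (pow_nonneg hq' _)
    linarith
  have hcnn : (0:ℝ) ≤ 2 / ((K:ℝ)*((K:ℝ)+1)) :=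
    div_nonneg (by norm_num) (mul_nonneg hKr.le (by linarith))
  calc 2 / ((K:ℝ)*((K:ℝ)+1)) * ∑ s ∈ Finset.range K, (((K+1).choose (s+2) : ℝ) * q^(s+1) * (1-q)^(K-(s+1)))
      ≤ 2 / ((K:ℝ)*((K:ℝ)+1)) * (1/q) := mul_le_mul_of_nonneg_left hT hcnn
    _ = 2 / ((K:ℝ) * ((K:ℝ)+1) * q) := by field_simp

private lemma denom_eq (q : ℝ) {K : ℕ} (hK : 2 ≤ K) :
    ∑ s ∈ Finset.range (K-1), (K.choose (s+2):ℝ) * q^(s+2) * (1-q)^(K-(s+2))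
      = 1 - (1-q)^K - (K:ℝ)*q*(1-q)^(K-1) := by
  have hb := binom_sum q K
  have e : K + 1 = (K-1) + 1 + 1 := by omega
  rw [e, Finset.sum_range_succ', Finset.sum_range_succ'] at hb
  norm_num at hb
  push_cast at hb
  have he : ∀ x ∈ Finset.range (K-1),
      (K.choose (x+2):ℝ) * q^(x+2) * (1-q)^(K-(x+2))
        = (K.choose (x+1+1):ℝ) * q^(x+1+1) * (1-q)^(K-(x+1+1)) := by
    intro x _; rfl
  rw [Finset.sum_congr rfl he]
  linarith

private lemma gamma_num {K : ℕ} (hK : 2 ≤ K) (q : ℝ) (k : Fin K) :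
    ∑ S ∈ (Finset.univ : Finset (Fin K)).powerset.filter
          (fun S => k ∈ S ∧ 2 ≤ S.card),
        (2 / (S.card : ℝ)) * (1 - q) ^ (K - S.card)
      = (2/(K:ℝ)) * ∑ s ∈ Finset.range (K-1), (K.choose (s+2):ℝ) * (1-q)^(K-(s+2)) := by
  have hK1 : 1 ≤ K := by omega
  have hfil : (Finset.univ : Finset (Fin K)).powerset.filter (fun S => k ∈ S ∧ 2 ≤ S.card)
      = ((Finset.univ : Finset (Fin K)).powerset.filter (fun S => k ∈ S)).filter
          (fun S => 2 ≤ S.card) := by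
    rw [Finset.filter_filter]
  rw [hfil, Finset.sum_filter]
  rw [sum_card_filter_mem k (fun n => if 2 ≤ n then (2 / (n : ℝ)) * (1 - q) ^ (K - n) else 0)]
  have hsplit := Finset.sum_range_succ' (fun s => ((K-1).choose s : ℝ) *
      (if 2 ≤ s+1 then (2 / ((s+1 : ℕ) : ℝ)) * (1 - q) ^ (K - (s+1)) else 0)) (K-1)
  rw [show K-1+1 = K by omega] at hsplit
  rw [hsplit]
  have h0 : ((K-1).choose 0 : ℝ) *
      (if 2 ≤ 0+1 then (2 / ((0+1 : ℕ) : ℝ)) * (1 - q) ^ (K - (0+1)) else 0) = 0 := by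
    norm_num
  rw [h0, add_zero, Finset.mul_sum]
  refine Finset.sum_congr rfl fun s _ => ?_
  have hif : (2:ℕ) ≤ s+1+1 := by omega
  rw [if_pos hif]
  have h := choose_div_succ K (s+1) hK1
  push_cast at h ⊢
  have hrw : ((K-1).choose (s+1) : ℝ) * (2 / ((s:ℝ)+1+1) * (1 - q) ^ (K - (s+1+1)))
      = 2 * (((K-1).choose (s+1) : ℝ) / ((s:ℝ)+1+1)) * (1 - q) ^ (K - (s+1+1)) := by
    ring
  rw [hrw, h]
  ring

private lemma pow_lt_one_of (x : ℝ) (hx0 : 0 ≤ x) (hx1 : x < 1) {n : ℕ} (hn : n ≠ 0) :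
    x ^ n < 1 := pow_lt_one₀ hx0 hx1 hn

/-- Corollary 1 of the paper: under a uniform successful sensing probability `q`, the
convergence error term `G` of Theorem 1 is bounded by
`(η/K)∑(σ²/δ + Λ²) + (2Lη²/(K²χq))∑(σ²/δ + 2Λ²) + (4Lη²/(K q^{K-2}))∑Λ²`. -/
theorem corollary_G_bound (K : ℕ) (hK : 2 ≤ K) (q qmin χ : ℝ)
    (hq0 : 0 < q) (hq1 : q ≤ 1) (hqmin0 : 0 < qmin) (hqminq : qmin ≤ q)
    (hχ : χ = 1 - (1 - qmin) ^ K)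
    (η L : ℝ) (hη : 0 < η) (hL : 0 < L)
    (δ σsq Λsq : Fin K → ℝ)
    (hδ : ∀ k, 0 < δ k) (hσ : ∀ k, 0 ≤ σsq k) (hΛ : ∀ k, 0 ≤ Λsq k)
    (α β γ : Fin K → ℝ)
    (hα : ∀ k, α k =
      (∑ S ∈ (Finset.univ : Finset (Fin K)).powerset.filter (fun S => k ∈ S),
          (1 / (S.card : ℝ)) * q ^ S.card * (1 - q) ^ (K - S.card)) /
        (1 - (1 - q) ^ K))
    (hβ : ∀ k, β k =
      (∑ S ∈ (Finset.univ : Finset (Fin K)).powerset.filter (fun S => k ∈ S),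
          (1 / (S.card : ℝ) ^ 2) * q ^ S.card * (1 - q) ^ (K - S.card)) /
        (1 - (1 - q) ^ K))
    (hγ : ∀ k, γ k =
      (∑ S ∈ (Finset.univ : Finset (Fin K)).powerset.filter
            (fun S => k ∈ S ∧ 2 ≤ S.card),
          (2 / (S.card : ℝ)) * (1 - q) ^ (K - S.card)) /
        (1 - (1 - q) ^ K - (K : ℝ) * q * (1 - q) ^ (K - 1)))
    (G : ℝ)
    (hG : G = η * (∑ k : Fin K, α k ^ 2) * (∑ k : Fin K, (σsq k / δ k + Λsq k)) +
      L * η ^ 2 * (∑ k : Fin K, β k * (σsq k / δ k + 2 * Λsq k)) +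
      2 * L * η ^ 2 * q ^ 2 * (∑ k : Fin K, γ k * Λsq k)) :
    G ≤ (η / (K : ℝ)) * (∑ k : Fin K, (σsq k / δ k + Λsq k)) +
      (2 * L * η ^ 2 / ((K : ℝ) ^ 2 * χ * q)) *
        (∑ k : Fin K, (σsq k / δ k + 2 * Λsq k)) +
      (4 * L * η ^ 2 / ((K : ℝ) * q ^ (K - 2))) * (∑ k : Fin K, Λsq k) := by
  have hK1 : 1 ≤ K := by omega
  have hKr : (0:ℝ) < K := by exact_mod_cast hK1
  have h1q : (0:ℝ) ≤ 1 - q := by linarith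
  have h1q1 : (1:ℝ) - q < 1 := by linarith
  have hd : 0 < 1 - (1-q)^K :=
    sub_pos.mpr (pow_lt_one_of _ h1q h1q1 (by omega))
  have hχpos : 0 < χ := by
    rw [hχ]
    exact sub_pos.mpr (pow_lt_one_of _ (by linarith) (by linarith) (by omega))
  have hχd : χ ≤ 1 - (1-q)^K := by
    rw [hχ]
    have : (1-q)^K ≤ (1-qmin)^K := pow_le_pow_left₀ h1q (by linarith) K
    linarith
  -- α
  have hαval : ∀ k, α k = 1 / K := by
    intro k
    rw [hα k, alpha_num hK1 q k, div_div,
      mul_comm ((K:ℝ)) (1 - (1-q)^K), ← div_div]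
    rw [div_self (ne_of_gt hd)]
  have hαsq : (∑ k : Fin K, α k ^ 2) = 1 / K := by
    simp only [hαval]
    rw [Finset.sum_const, Finset.card_univ, Fintype.card_fin, nsmul_eq_mul]
    field_simp
  -- β
  have hβle : ∀ k, β k ≤ 2 / ((K:ℝ)^2 * χ * q) := by
    intro k
    rw [hβ k]
    have h1 : β k ≤ β k := le_refl _
    calc (∑ S ∈ (Finset.univ : Finset (Fin K)).powerset.filter (fun S => k ∈ S),
            (1 / (S.card : ℝ) ^ 2) * q ^ S.card * (1 - q) ^ (K - S.card)) / (1 - (1-q)^K)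
        ≤ (2 / ((K:ℝ) * ((K:ℝ)+1) * q)) / (1 - (1-q)^K) := by
          exact (div_le_div_iff_of_pos_right hd).mpr (beta_num_le hK1 hq0 hq1 k)
      _ = 2 / ((K:ℝ) * ((K:ℝ)+1) * q * (1 - (1-q)^K)) := by rw [div_div]
      _ ≤ 2 / ((K:ℝ)^2 * χ * q) := by
          apply div_le_div_of_nonneg_left (by norm_num) (by positivity)
          have f1 : χ * ((K:ℝ)^2*q) ≤ (1-(1-q)^K) * ((K:ℝ)^2*q) :=
            mul_le_mul_of_nonneg_right hχd (by positivity)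
          have hK2 : (K:ℝ)^2 ≤ (K:ℝ)*((K:ℝ)+1) := by nlinarith
          have f2 : (K:ℝ)^2 * (q*(1-(1-q)^K)) ≤ ((K:ℝ)*((K:ℝ)+1)) * (q*(1-(1-q)^K)) :=
            mul_le_mul_of_nonneg_right hK2 (mul_nonneg hq0.le hd.le)
          nlinarith [f1, f2]
  -- γ
  have hγle : ∀ k, γ k ≤ 2 / ((K:ℝ) * q^K) := by
    intro k
    rw [hγ k, gamma_num hK q k]
    set N : ℝ := ∑ s ∈ Finset.range (K-1), (K.choose (s+2):ℝ) * (1-q)^(K-(s+2)) with hN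
    have hNnn : ∀ s ∈ Finset.range (K-1), (0:ℝ) ≤ (K.choose (s+2):ℝ) * (1-q)^(K-(s+2)) := by
      intro s _
      exact mul_nonneg (Nat.cast_nonneg _) (pow_nonneg h1q _)
    have hN1 : (1:ℝ) ≤ N := by
      have hmem : K - 2 ∈ Finset.range (K-1) := by
        rw [Finset.mem_range]; omega
      have := Finset.single_le_sum hNnn hmem
      have he : (K.choose (K-2+2):ℝ) * (1-q)^(K-(K-2+2)) = 1 := by
        rw [show K-2+2 = K by omega]
        simp
      rw [he] at this
      exact this
    have hNpos : (0:ℝ) < N := by linarith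
    have hD : 1 - (1-q)^K - (K:ℝ)*q*(1-q)^(K-1)
        = ∑ s ∈ Finset.range (K-1), (K.choose (s+2):ℝ) * q^(s+2) * (1-q)^(K-(s+2)) :=
      (denom_eq q hK).symm
    have hDge : q^K * N ≤ 1 - (1-q)^K - (K:ℝ)*q*(1-q)^(K-1) := by
      rw [hD, hN, Finset.mul_sum]
      apply Finset.sum_le_sum
      intro s hs
      rw [Finset.mem_range] at hs
      have hqp : q^K ≤ q^(s+2) := pow_le_pow_of_le_one hq0.le hq1 (by omega)
      have : q^K * ((K.choose (s+2):ℝ) * (1-q)^(K-(s+2)))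
          = (K.choose (s+2):ℝ) * q^K * (1-q)^(K-(s+2)) := by ring
      rw [this]
      apply mul_le_mul_of_nonneg_right _ (pow_nonneg h1q _)
      exact mul_le_mul_of_nonneg_left hqp (Nat.cast_nonneg _)
    have hDpos : 0 < 1 - (1-q)^K - (K:ℝ)*q*(1-q)^(K-1) := by
      have : 0 < q^K * N := mul_pos (pow_pos hq0 K) hNpos
      linarith
    calc (2/(K:ℝ)) * N / (1 - (1-q)^K - (K:ℝ)*q*(1-q)^(K-1))
        ≤ (2/(K:ℝ)) * N / (q^K * N) := by
          apply div_le_div_of_nonneg_left _ (mul_pos (pow_pos hq0 K) hNpos) hDge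
          positivity
      _ = 2 / ((K:ℝ) * q^K) := by
          field_simp
  -- assembling
  have hA : (0:ℝ) ≤ ∑ k : Fin K, (σsq k / δ k + Λsq k) := by
    apply Finset.sum_nonneg
    intro k _
    have := div_nonneg (hσ k) (hδ k).le
    linarith [hΛ k]
  have hterm1 : η * (∑ k : Fin K, α k ^ 2) * (∑ k : Fin K, (σsq k / δ k + Λsq k))
      = (η / (K : ℝ)) * (∑ k : Fin K, (σsq k / δ k + Λsq k)) := by
    rw [hαsq]; ring
  have hterm2 : L * η ^ 2 * (∑ k : Fin K, β k * (σsq k / δ k + 2 * Λsq k))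
      ≤ (2 * L * η ^ 2 / ((K : ℝ) ^ 2 * χ * q)) * (∑ k : Fin K, (σsq k / δ k + 2 * Λsq k)) := by
    have hsle : (∑ k : Fin K, β k * (σsq k / δ k + 2 * Λsq k))
        ≤ (2 / ((K:ℝ)^2 * χ * q)) * (∑ k : Fin K, (σsq k / δ k + 2 * Λsq k)) := by
      rw [Finset.mul_sum]
      apply Finset.sum_le_sum
      intro k _
      have hc : (0:ℝ) ≤ σsq k / δ k + 2 * Λsq k := by
        have := div_nonneg (hσ k) (hδ k).le
        linarith [hΛ k]
      exact mul_le_mul_of_nonneg_right (hβle k) hc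
    calc L * η ^ 2 * (∑ k : Fin K, β k * (σsq k / δ k + 2 * Λsq k))
        ≤ L * η ^ 2 * ((2 / ((K:ℝ)^2 * χ * q)) * (∑ k : Fin K, (σsq k / δ k + 2 * Λsq k))) :=
          mul_le_mul_of_nonneg_left hsle (by positivity)
      _ = (2 * L * η ^ 2 / ((K : ℝ) ^ 2 * χ * q)) * (∑ k : Fin K, (σsq k / δ k + 2 * Λsq k)) := by
          ring
  have hterm3 : 2 * L * η ^ 2 * q ^ 2 * (∑ k : Fin K, γ k * Λsq k)
      ≤ (4 * L * η ^ 2 / ((K : ℝ) * q ^ (K - 2))) * (∑ k : Fin K, Λsq k) := by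
    have hsle : (∑ k : Fin K, γ k * Λsq k) ≤ (2 / ((K:ℝ) * q^K)) * (∑ k : Fin K, Λsq k) := by
      rw [Finset.mul_sum]
      apply Finset.sum_le_sum
      intro k _
      exact mul_le_mul_of_nonneg_right (hγle k) (hΛ k)
    calc 2 * L * η ^ 2 * q ^ 2 * (∑ k : Fin K, γ k * Λsq k)
        ≤ 2 * L * η ^ 2 * q ^ 2 * ((2 / ((K:ℝ) * q^K)) * (∑ k : Fin K, Λsq k)) :=
          mul_le_mul_of_nonneg_left hsle (by positivity)
      _ = (4 * L * η ^ 2 / ((K : ℝ) * q ^ (K - 2))) * (∑ k : Fin K, Λsq k) := by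
          have hqK : q ^ K = q ^ (K-2) * q ^ 2 := by
            rw [← pow_add]
            congr 1
            omega
          rw [hqK]
          have hq2 : q^2 ≠ 0 := by positivity
          have hqK2 : q^(K-2) ≠ 0 := by positivity
          field_simp
          ring
  rw [hG, hterm1]
  linarith [hterm2, hterm3]
end

section
/- Let K ≥ 1, let (Ω, P) be a probability space, let B_1,…,B_K be {0,1}-valued random variables with P(B_k = 1) = q_k ∈ [0,1], and let g_1,…,g_K be integrable random vectors with values in a finite-dimensional real normed space E, such that the family (B_1,…,B_K, g_1,…,g_K) is mutually independent. Then E[ 1_{∑_k B_k ≥ 1} · (∑_{k=1}^K B_k g_k)/(∑_{k=1}^K B_k) ] = ∑_{k=1}^K c_k · E[g_k], where c_k = ∑_{S ⊆ {1,…,K}, k ∈ S} (1/|S|) · ∏_{i∈S} q_i · ∏_{j∉S} (1 − q_j). -/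
open Finset MeasureTheory ProbabilityTheory

open MeasurableSpace

private lemma indep_mono' {Ω : Type*} {mΩ : MeasurableSpace Ω} {μ : Measure Ω}
    {m₁ m₂ m₁' m₂' : MeasurableSpace Ω} (h : Indep m₁ m₂ μ) (h1 : m₁' ≤ m₁) (h2 : m₂' ≤ m₂) :
    Indep m₁' m₂' μ := by
  rw [Indep_iff] at h ⊢
  intro t1 t2 ht1 ht2
  exact h t1 t2 (h1 t1 ht1) (h2 t2 ht2)

private lemma indep_biSup_single {ι Ω : Type*} {mΩ : MeasurableSpace Ω} {μ : Measure Ω}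
    [IsProbabilityMeasure μ] {m : ι → MeasurableSpace Ω} (h : iIndep m μ)
    (I : Finset ι) (hle : ∀ i ∈ I, m i ≤ mΩ) (j : ι) (hj : j ∉ I) :
    Indep (⨆ i ∈ (I : Set ι), m i) (m j) μ := by
  have hle' : (⨆ i ∈ (I : Set ι), m i) ≤ mΩ :=
    iSup₂_le fun i hi => hle i (Finset.mem_coe.1 hi)
  rw [Indep_iff]
  intro t1 t2 ht1 ht2
  have h_eq : (⨆ i ∈ (I : Set ι), m i)
      = generateFrom (piiUnionInter (fun n => {s | MeasurableSet[m n] s}) (I : Set ι)) :=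
    (generateFrom_piiUnionInter_measurableSet m (I : Set ι)).symm
  have h_pi : IsPiSystem (piiUnionInter (fun n => {s | MeasurableSet[m n] s}) (I : Set ι)) :=
    isPiSystem_piiUnionInter _ (fun n => @isPiSystem_measurableSet Ω (m n)) _
  revert ht1
  refine @MeasurableSpace.induction_on_inter Ω (⨆ i ∈ (I : Set ι), m i)
    (fun t _ => μ (t ∩ t2) = μ t * μ t2) _ h_eq h_pi ?_ ?_ ?_ ?_ t1
  · simp
  · -- basic
    rintro t ⟨s, hsI, f, hf, rfl⟩
    have hjs : j ∉ s := fun hmem => hj (Finset.mem_coe.1 (hsI (Finset.mem_coe.2 hmem)))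
    classical
    set F : ι → Set Ω := fun i => if i = j then t2 else f i with hF
    have hFmeas : ∀ i ∈ insert j s, MeasurableSet[m i] (F i) := by
      intro i hi
      by_cases hij : i = j
      · subst hij; simpa [hF] using ht2
      · simp only [hF, if_neg hij]
        exact hf i ((Finset.mem_insert.1 hi).resolve_left hij)
    have key : μ (⋂ i ∈ (insert j s : Finset ι), F i) = ∏ i ∈ (insert j s : Finset ι), μ (F i) :=
      h.meas_biInter hFmeas
    have hset : (⋂ i ∈ (insert j s : Finset ι), F i) = t2 ∩ ⋂ i ∈ s, f i := by
      rw [Finset.set_biInter_insert]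
      congr 1
      · simp [hF]
      · refine Set.iInter₂_congr fun i hi => ?_
        have : i ≠ j := fun h' => hjs (h' ▸ hi)
        simp [hF, this]
    have hprod : ∏ i ∈ (insert j s : Finset ι), μ (F i) = μ t2 * ∏ i ∈ s, μ (f i) := by
      rw [Finset.prod_insert hjs]
      congr 1
      · simp [hF]
      · refine Finset.prod_congr rfl fun i hi => ?_
        have : i ≠ j := fun h' => hjs (h' ▸ hi)
        simp [hF, this]
    have hbase : μ (⋂ i ∈ s, f i) = ∏ i ∈ s, μ (f i) := h.meas_biInter hf
    rw [Set.inter_comm, ← hset, key, hprod, hbase, mul_comm]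
  · -- compl
    intro t hmt ih
    have htΩ : MeasurableSet t := hle' t hmt
    calc μ (tᶜ ∩ t2) = μ.restrict t2 tᶜ := (Measure.restrict_apply htΩ.compl).symm
      _ = μ.restrict t2 Set.univ - μ.restrict t2 t := measure_compl htΩ (measure_ne_top _ _)
      _ = μ t2 - μ (t ∩ t2) := by rw [Measure.restrict_apply htΩ, Measure.restrict_apply_univ]
      _ = 1 * μ t2 - μ t * μ t2 := by rw [ih, one_mul]
      _ = (1 - μ t) * μ t2 := (ENNReal.sub_mul (fun _ _ => measure_ne_top _ _)).symm
      _ = μ tᶜ * μ t2 := by rw [prob_compl_eq_one_sub htΩ]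
  · -- union
    intro f hd hm ih
    have hfΩ : ∀ n, MeasurableSet (f n) := fun n => hle' _ (hm n)
    calc μ ((⋃ n, f n) ∩ t2) = μ.restrict t2 (⋃ n, f n) :=
          (Measure.restrict_apply (MeasurableSet.iUnion hfΩ)).symm
      _ = ∑' n, μ.restrict t2 (f n) := measure_iUnion hd hfΩ
      _ = ∑' n, μ (f n) * μ t2 := by
          refine tsum_congr fun n => ?_
          rw [Measure.restrict_apply (hfΩ n), ih n]
      _ = (∑' n, μ (f n)) * μ t2 := ENNReal.tsum_mul_right
      _ = μ (⋃ n, f n) * μ t2 := by rw [measure_iUnion hd hfΩ]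

private lemma indep_integral_smul {Ω : Type*} [MeasurableSpace Ω] {P : Measure Ω}
    [IsProbabilityMeasure P] {E : Type} [NormedAddCommGroup E] [NormedSpace ℝ E]
    [FiniteDimensional ℝ E] [MeasurableSpace E] [BorelSpace E]
    {φ : Ω → ℝ} {g : Ω → E}
    (hφ : Integrable φ P) (hg : Integrable g P) (hφg : Integrable (fun ω => φ ω • g ω) P)
    (hindep : ∀ L : StrongDual ℝ E, IndepFun φ (fun ω => L (g ω)) P) :
    ∫ ω, φ ω • g ω ∂P = (∫ ω, φ ω ∂P) • ∫ ω, g ω ∂P := by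
  have : CompleteSpace E := FiniteDimensional.complete ℝ E
  rw [NormedSpace.eq_iff_forall_dual_eq ℝ]
  intro L
  have h1 : L (∫ ω, φ ω • g ω ∂P) = ∫ ω, L (φ ω • g ω) ∂P := (L.integral_comp_comm hφg).symm
  have h2 : ∀ ω, L (φ ω • g ω) = φ ω * L (g ω) := fun ω => by
    rw [_root_.map_smul, smul_eq_mul]
  have h3 : ∫ ω, φ ω * L (g ω) ∂P = (∫ ω, φ ω ∂P) * ∫ ω, L (g ω) ∂P :=
    (hindep L).integral_fun_mul_eq_mul_integral hφ.aestronglyMeasurable (L.integrable_comp hg).aestronglyMeasurable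
  have h4 : ∫ ω, L (g ω) ∂P = L (∫ ω, g ω ∂P) := L.integral_comp_comm hg
  rw [h1]
  simp_rw [h2]
  rw [h3, h4, _root_.map_smul, smul_eq_mul]

/-- Type family used to express mutual independence of the joint family
`(B_1, …, B_K, g_1, …, g_K)`, where the `B_k` are real-valued and the `g_k` take values
in `E`. -/
def mixType3 (E : Type) (K : ℕ) : Fin K ⊕ Fin K → Type _
  | Sum.inl _ => ℝ
  | Sum.inr _ => E

/-- The joint family `(B_1, …, B_K, g_1, …, g_K)` as a single indexed family. -/
def mixFun3 {Ω : Type*} {E : Type} {K : ℕ} (B : Fin K → Ω → ℝ) (g : Fin K → Ω → E) :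
    (j : Fin K ⊕ Fin K) → Ω → mixType3 E K j
  | Sum.inl i => B i
  | Sum.inr i => g i

/-- The measurable-space structures on the members of the joint family. -/
def mixMeas3 (E : Type) [mE : MeasurableSpace E] (K : ℕ) :
    (j : Fin K ⊕ Fin K) → MeasurableSpace (mixType3 E K j)
  | Sum.inl _ => inferInstanceAs (MeasurableSpace ℝ)
  | Sum.inr _ => mE

/-- Aggregation identity: for `{0,1}`-valued `B_k` with `P(B_k = 1) = q_k` and integrable
`g_k`, all mutually independent,
`E[1_{∑ B_k ≥ 1} (∑ B_k g_k)/(∑ B_k)] = ∑_k c_k E[g_k]` with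
`c_k = ∑_{S ∋ k} (1/|S|) ∏_{i∈S} q_i ∏_{j∉S} (1 - q_j)`. -/
theorem aggregation_identity
    {Ω : Type*} [MeasurableSpace Ω] (P : Measure Ω) [IsProbabilityMeasure P]
    {E : Type} [NormedAddCommGroup E] [NormedSpace ℝ E] [FiniteDimensional ℝ E]
    [MeasurableSpace E] [BorelSpace E]
    (K : ℕ) (hK : 1 ≤ K) (B : Fin K → Ω → ℝ) (g : Fin K → Ω → E) (q : Fin K → ℝ)
    (hq : ∀ k, 0 ≤ q k ∧ q k ≤ 1)
    (hBmeas : ∀ k, Measurable (B k))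
    (hB01 : ∀ k ω, B k ω = 0 ∨ B k ω = 1)
    (hBq : ∀ k, P {ω | B k ω = 1} = ENNReal.ofReal (q k))
    (hgint : ∀ k, Integrable (g k) P)
    (hindep : iIndepFun (m := mixMeas3 E K) (mixFun3 B g) P)
    (c : Fin K → ℝ)
    (hc : ∀ k, c k =
      ∑ S ∈ (Finset.univ : Finset (Fin K)).powerset.filter (fun S => k ∈ S),
        (1 / (S.card : ℝ)) * (∏ i ∈ S, q i) * ∏ j ∈ Sᶜ, (1 - q j)) :
    (∫ ω, (if 1 ≤ ∑ k : Fin K, B k ω then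
        (∑ k : Fin K, B k ω)⁻¹ • ∑ k : Fin K, B k ω • g k ω else 0) ∂P)
      = ∑ k : Fin K, c k • ∫ ω, g k ω ∂P := by
  classical
  have hE : CompleteSpace E := FiniteDimensional.complete ℝ E
  -- the events A S = {ω | ∀ i, B i ω = 1 ↔ i ∈ S}
  set A : Finset (Fin K) → Set Ω :=
    fun S => ⋂ i : Fin K, B i ⁻¹' {if i ∈ S then (1:ℝ) else 0} with hAdef
  have hAmeas : ∀ S, MeasurableSet (A S) := fun S =>
    MeasurableSet.iInter fun i => (hBmeas i) (measurableSet_singleton _)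
  set T : Ω → Finset (Fin K) := fun ω => Finset.univ.filter (fun k => B k ω = 1) with hTdef
  have hmemA : ∀ (S : Finset (Fin K)) (ω : Ω), ω ∈ A S ↔ T ω = S := by
    intro S ω
    simp only [hAdef, Set.mem_iInter, Set.mem_preimage, Set.mem_singleton_iff]
    constructor
    · intro hall
      ext k
      simp only [hTdef, Finset.mem_filter, Finset.mem_univ, true_and]
      constructor
      · intro hk1
        by_contra hk
        rw [hall k, if_neg hk] at hk1
        exact one_ne_zero hk1.symm
      · intro hk
        rw [hall k, if_pos hk]
    · intro hTeq i
      by_cases hi : i ∈ S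
      · rw [if_pos hi]
        have : i ∈ T ω := hTeq ▸ hi
        simpa [hTdef] using this
      · rw [if_neg hi]
        have : i ∉ T ω := fun hmem => hi (hTeq ▸ hmem)
        simp only [hTdef, Finset.mem_filter, Finset.mem_univ, true_and] at this
        exact (hB01 i ω).resolve_right this
  have hsumB : ∀ ω, ∑ k : Fin K, B k ω = ((T ω).card : ℝ) := by
    intro ω
    rw [hTdef]
    rw [← Finset.sum_boole]
    refine Finset.sum_congr rfl fun k _ => ?_
    rcases hB01 k ω with h0 | h1
    · norm_num [h0]
    · norm_num [h1]
  have hsumBg : ∀ ω, ∑ k : Fin K, B k ω • g k ω = ∑ k ∈ T ω, g k ω := by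
    intro ω
    rw [hTdef, Finset.sum_filter]
    refine Finset.sum_congr rfl fun k _ => ?_
    rcases hB01 k ω with h0 | h1
    · norm_num [h0]
    · norm_num [h1]
  set h : Finset (Fin K) → Ω → E := fun S ω => ((S.card : ℝ))⁻¹ • ∑ k ∈ S, g k ω with hhdef
  have hhint : ∀ S, Integrable (h S) P := fun S =>
    (integrable_finset_sum S fun k _ => hgint k).smul _
  have hdecomp : ∀ ω, (if 1 ≤ ∑ k : Fin K, B k ω then
      (∑ k : Fin K, B k ω)⁻¹ • ∑ k : Fin K, B k ω • g k ω else 0)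
      = ∑ S ∈ (Finset.univ : Finset (Fin K)).powerset, (A S).indicator (h S) ω := by
    intro ω
    have hsingle : ∑ S ∈ (Finset.univ : Finset (Fin K)).powerset, (A S).indicator (h S) ω
        = h (T ω) ω := by
      refine Finset.sum_eq_single_of_mem (T ω) (Finset.mem_powerset.2 (Finset.subset_univ _))
        (fun S _ hne => ?_) |>.trans ?_
      · exact Set.indicator_of_notMem (fun hmem => hne ((hmemA S ω).1 hmem).symm) _
      · exact Set.indicator_of_mem ((hmemA (T ω) ω).2 rfl) _
    rw [hsingle]
    by_cases hT0 : T ω = ∅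
    · have hno : ¬ (1 ≤ ∑ k : Fin K, B k ω) := by
        rw [hsumB ω, hT0]; norm_num
      rw [if_neg hno, hhdef]
      simp [hT0]
    · have hpos : 1 ≤ ∑ k : Fin K, B k ω := by
        rw [hsumB ω]
        exact_mod_cast Finset.card_pos.2 (Finset.nonempty_of_ne_empty hT0)
      rw [if_pos hpos, hsumB ω, hsumBg ω, hhdef]
  have hPA : ∀ S : Finset (Fin K),
      P (A S) = ENNReal.ofReal (∏ i : Fin K, if i ∈ S then q i else 1 - q i) := by
    intro S
    set F : (Fin K ⊕ Fin K) → Set Ω := fun j =>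
      Sum.elim (fun i => B i ⁻¹' {if i ∈ S then (1:ℝ) else 0}) (fun _ => Set.univ) j with hFdef
    have hFmeas : ∀ j ∈ (Finset.univ : Finset (Fin K)).image Sum.inl,
        MeasurableSet[(mixMeas3 E K j).comap (mixFun3 B g j)] (F j) := by
      intro j hj
      obtain ⟨i, -, rfl⟩ := Finset.mem_image.1 hj
      show MeasurableSet[(inferInstance : MeasurableSpace ℝ).comap (B i)]
        (B i ⁻¹' {if i ∈ S then (1:ℝ) else 0})
      exact ⟨{if i ∈ S then (1:ℝ) else 0}, measurableSet_singleton _, rfl⟩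
    have key := hindep.meas_biInter (S := (Finset.univ : Finset (Fin K)).image Sum.inl) hFmeas
    have hset : (⋂ j ∈ (Finset.univ : Finset (Fin K)).image Sum.inl, F j) = A S := by
      rw [Finset.set_biInter_finset_image]
      ext ω
      simp [hFdef, hAdef]
    have hprod : ∏ j ∈ (Finset.univ : Finset (Fin K)).image Sum.inl, P (F j)
        = ∏ i : Fin K, P (B i ⁻¹' {if i ∈ S then (1:ℝ) else 0}) := by
      rw [Finset.prod_image (fun x _ y _ hxy => Sum.inl_injective hxy)]
      exact Finset.prod_congr rfl fun i _ => rfl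
    have hfactor : ∀ i : Fin K,
        P (B i ⁻¹' {if i ∈ S then (1:ℝ) else 0})
          = ENNReal.ofReal (if i ∈ S then q i else 1 - q i) := by
      intro i
      by_cases hi : i ∈ S
      · rw [if_pos hi, if_pos hi]
        have : B i ⁻¹' {(1:ℝ)} = {ω | B i ω = 1} := rfl
        rw [this, hBq i]
      · rw [if_neg hi, if_neg hi]
        have hcompl : B i ⁻¹' {(0:ℝ)} = {ω | B i ω = 1}ᶜ := by
          ext ω
          simp only [Set.mem_preimage, Set.mem_singleton_iff, Set.mem_compl_iff,
            Set.mem_setOf_eq]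
          constructor
          · intro h0 h1; rw [h0] at h1; exact one_ne_zero h1.symm
          · intro h1; exact (hB01 i ω).resolve_right h1
        have hm1 : MeasurableSet {ω | B i ω = 1} := (hBmeas i) (measurableSet_singleton 1)
        rw [hcompl, prob_compl_eq_one_sub hm1, hBq i,
          ENNReal.ofReal_sub 1 (hq i).1, ENNReal.ofReal_one]
    rw [← hset, key, hprod, ENNReal.ofReal_prod_of_nonneg (fun i _ => ?_)]
    · exact Finset.prod_congr rfl fun i _ => hfactor i
    · by_cases hi : i ∈ S
      · rw [if_pos hi]; exact (hq i).1
      · rw [if_neg hi]; linarith [(hq i).2]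
  have hkey : ∀ (S : Finset (Fin K)) (k : Fin K),
      ∫ ω in A S, g k ω ∂P = (P (A S)).toReal • ∫ ω, g k ω ∂P := by
    intro S k
    set φ : Ω → ℝ := (A S).indicator (fun _ => (1:ℝ)) with hφdef
    have hφsmul : ∀ ω, φ ω • g k ω = (A S).indicator (g k) ω := by
      intro ω
      by_cases hω : ω ∈ A S <;> simp [hφdef, hω]
    have hφint : Integrable φ P := (integrable_const (1:ℝ)).indicator (hAmeas S)
    have hφgint : Integrable (fun ω => φ ω • g k ω) P :=
      ((hgint k).indicator (hAmeas S)).congr (ae_of_all _ fun ω => (hφsmul ω).symm)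
    set I : Finset (Fin K ⊕ Fin K) := (Finset.univ : Finset (Fin K)).image Sum.inl with hIdef
    set m : (Fin K ⊕ Fin K) → MeasurableSpace Ω :=
      fun j => (mixMeas3 E K j).comap (mixFun3 B g j) with hmdef
    have hle : ∀ j ∈ I, m j ≤ (inferInstance : MeasurableSpace Ω) := by
      intro j hj
      obtain ⟨i, -, rfl⟩ := Finset.mem_image.1 hj
      exact measurable_iff_comap_le.1 (hBmeas i)
    have hik : Sum.inr k ∉ I := by simp [hIdef]
    have hIndep : Indep (⨆ j ∈ (I : Set (Fin K ⊕ Fin K)), m j) (m (Sum.inr k)) P :=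
      indep_biSup_single hindep.iIndep I hle _ hik
    have hA₁ : MeasurableSet[⨆ j ∈ (I : Set (Fin K ⊕ Fin K)), m j] (A S) := by
      rw [hAdef]
      refine MeasurableSet.iInter fun i => ?_
      have hle2 : m (Sum.inl i) ≤ ⨆ j ∈ (I : Set (Fin K ⊕ Fin K)), m j :=
        le_iSup₂ (f := fun j (_ : j ∈ (I : Set (Fin K ⊕ Fin K))) => m j) (Sum.inl i)
          (by simp [hIdef])
      refine hle2 _ ?_
      show MeasurableSet[(inferInstance : MeasurableSpace ℝ).comap (B i)]
        (B i ⁻¹' {if i ∈ S then (1:ℝ) else 0})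
      exact ⟨_, measurableSet_singleton _, rfl⟩
    have hφmeas : Measurable[⨆ j ∈ (I : Set (Fin K ⊕ Fin K)), m j] φ :=
      measurable_const.indicator hA₁
    have hindepL : ∀ L : StrongDual ℝ E, IndepFun φ (fun ω => L (g k ω)) P := by
      intro L
      rw [IndepFun_iff_Indep]
      refine indep_mono' hIndep (measurable_iff_comap_le.1 hφmeas) ?_
      show MeasurableSpace.comap (fun ω => L (g k ω)) (inferInstance : MeasurableSpace ℝ)
        ≤ MeasurableSpace.comap (g k) (inferInstance : MeasurableSpace E)
      have : (fun ω => L (g k ω)) = L ∘ g k := rfl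
      rw [this, ← MeasurableSpace.comap_comp]
      exact MeasurableSpace.comap_mono (measurable_iff_comap_le.1 L.continuous.measurable)
    calc ∫ ω in A S, g k ω ∂P
        = ∫ ω, (A S).indicator (g k) ω ∂P := (integral_indicator (hAmeas S)).symm
      _ = ∫ ω, φ ω • g k ω ∂P := integral_congr_ae (ae_of_all _ fun ω => (hφsmul ω).symm)
      _ = (∫ ω, φ ω ∂P) • ∫ ω, g k ω ∂P := indep_integral_smul hφint (hgint k) hφgint hindepL
      _ = (P (A S)).toReal • ∫ ω, g k ω ∂P := by
          rw [hφdef]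
          congr 1
          exact integral_indicator_one (hAmeas S)
  set p : Finset (Fin K) → ℝ := fun S => ∏ i : Fin K, if i ∈ S then q i else 1 - q i with hpdef
  have hpnonneg : ∀ S, 0 ≤ p S := fun S => Finset.prod_nonneg fun i _ => by
    by_cases hi : i ∈ S
    · rw [if_pos hi]; exact (hq i).1
    · rw [if_neg hi]; linarith [(hq i).2]
  have hPAtoReal : ∀ S, (P (A S)).toReal = p S := fun S => by
    rw [hPA S, ENNReal.toReal_ofReal (hpnonneg S)]
  have hpsplit : ∀ S : Finset (Fin K), p S = (∏ i ∈ S, q i) * ∏ j ∈ Sᶜ, (1 - q j) := by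
    intro S
    show (∏ i : Fin K, if i ∈ S then q i else 1 - q i) = _
    rw [← Finset.prod_mul_prod_compl S (fun i => if i ∈ S then q i else 1 - q i)]
    congr 1
    · exact Finset.prod_congr rfl fun i hi => if_pos hi
    · exact Finset.prod_congr rfl fun i hi => if_neg (Finset.mem_compl.1 hi)
  calc (∫ ω, (if 1 ≤ ∑ k : Fin K, B k ω then
        (∑ k : Fin K, B k ω)⁻¹ • ∑ k : Fin K, B k ω • g k ω else 0) ∂P)
      = ∫ ω, ∑ S ∈ (Finset.univ : Finset (Fin K)).powerset, (A S).indicator (h S) ω ∂P :=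
        integral_congr_ae (ae_of_all _ hdecomp)
    _ = ∑ S ∈ (Finset.univ : Finset (Fin K)).powerset, ∫ ω, (A S).indicator (h S) ω ∂P :=
        integral_finset_sum _ fun S _ => (hhint S).indicator (hAmeas S)
    _ = ∑ S ∈ (Finset.univ : Finset (Fin K)).powerset,
          ((S.card : ℝ))⁻¹ • ∑ k ∈ S, (P (A S)).toReal • ∫ ω, g k ω ∂P := by
        refine Finset.sum_congr rfl fun S _ => ?_
        rw [integral_indicator (hAmeas S)]
        simp only [hhdef]
        rw [integral_smul, integral_finset_sum S fun k _ => (hgint k).restrict]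
        congr 1
        exact Finset.sum_congr rfl fun k _ => hkey S k
    _ = ∑ S ∈ (Finset.univ : Finset (Fin K)).powerset,
          ∑ k ∈ S, (((S.card : ℝ))⁻¹ * p S) • ∫ ω, g k ω ∂P := by
        refine Finset.sum_congr rfl fun S _ => ?_
        rw [Finset.smul_sum]
        refine Finset.sum_congr rfl fun k _ => ?_
        rw [hPAtoReal S, smul_smul]
    _ = ∑ k : Fin K, (∑ S ∈ (Finset.univ : Finset (Fin K)).powerset.filter (fun S => k ∈ S),
          ((S.card : ℝ))⁻¹ * p S) • ∫ ω, g k ω ∂P := by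
        have hstep : ∀ S ∈ (Finset.univ : Finset (Fin K)).powerset,
            ∑ k ∈ S, (((S.card : ℝ))⁻¹ * p S) • ∫ ω, g k ω ∂P
            = ∑ k : Fin K, (if k ∈ S then (((S.card : ℝ))⁻¹ * p S) • ∫ ω, g k ω ∂P else 0) := by
          intro S _
          rw [Finset.sum_ite_mem, Finset.univ_inter]
        rw [Finset.sum_congr rfl hstep, Finset.sum_comm]
        refine Finset.sum_congr rfl fun k _ => ?_
        rw [← Finset.sum_filter, Finset.sum_smul]
    _ = ∑ k : Fin K, c k • ∫ ω, g k ω ∂P := by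
        refine Finset.sum_congr rfl fun k _ => ?_
        congr 1
        rw [hc k]
        refine Finset.sum_congr rfl fun S _ => ?_
        rw [hpsplit S, ← mul_assoc, one_div]
end

section
/- Let V be a real vector space, n ≥ 1, g : {1,…,n} → V, and q ∈ ℝ. Then ∑_{S ⊆ {1,…,n}, S ≠ ∅} q^{|S|} (1−q)^{n−|S|} · (1/|S|) · ∑_{k∈S} g_k = ((1 − (1−q)^n)/n) · ∑_{k=1}^n g_k. -/
open Finset

lemma coeff_sum (n : ℕ) (hn : 1 ≤ n) (q : ℝ) (k : Fin n) :
    ∑ S ∈ (Finset.univ : Finset (Fin n)).powerset.filter (fun S => k ∈ S),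
      q ^ S.card * (1 - q) ^ (n - S.card) * (1 / (S.card : ℝ))
    = (1 - (1 - q) ^ n) / n := by
  have hins : (Finset.univ : Finset (Fin n)) = insert k (univ.erase k) := by
    rw [insert_erase (mem_univ k)]
  have hk : k ∉ (univ : Finset (Fin n)).erase k := notMem_erase _ _
  -- reindex over subsets T of univ.erase k, S = insert k T
  have hbij : ∑ S ∈ (Finset.univ : Finset (Fin n)).powerset.filter (fun S => k ∈ S),
      q ^ S.card * (1 - q) ^ (n - S.card) * (1 / (S.card : ℝ))
      = ∑ T ∈ ((univ : Finset (Fin n)).erase k).powerset,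
        q ^ (T.card + 1) * (1 - q) ^ (n - (T.card + 1)) * (1 / ((T.card + 1 : ℕ) : ℝ)) := by
    apply Finset.sum_nbij' (fun S => S.erase k) (fun T => insert k T)
    · intro S hS
      simp only [mem_filter, mem_powerset] at hS
      simp only [mem_powerset]
      exact erase_subset_erase k hS.1
    · intro T hT
      simp only [mem_powerset] at hT
      simp only [mem_filter, mem_powerset]
      exact ⟨subset_univ _, mem_insert_self _ _⟩
    · intro S hS
      simp only [mem_filter] at hS
      rw [insert_erase hS.2]
    · intro T hT
      simp only [mem_powerset] at hT
      rw [erase_insert (fun h => hk (hT h))]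
    · intro S hS
      simp only [mem_filter] at hS
      rw [card_erase_of_mem hS.2]
      have hc : 1 ≤ S.card := card_pos.mpr ⟨k, hS.2⟩
      rw [Nat.sub_add_cancel hc]
  rw [hbij]
  -- group by cardinality
  rw [Finset.sum_powerset]
  have hcard : ((univ : Finset (Fin n)).erase k).card = n - 1 := by
    rw [card_erase_of_mem (mem_univ k), card_univ, Fintype.card_fin]
  rw [hcard]
  have hstep : ∀ j ∈ Finset.range (n - 1 + 1),
      (∑ T ∈ ((univ : Finset (Fin n)).erase k).powersetCard j,
        q ^ (T.card + 1) * (1 - q) ^ (n - (T.card + 1)) * (1 / ((T.card + 1 : ℕ) : ℝ)))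
      = ((n-1).choose j : ℝ) * (q ^ (j + 1) * (1 - q) ^ (n - (j + 1)) * (1 / ((j + 1 : ℕ) : ℝ))) := by
    intro j hj
    rw [Finset.sum_congr rfl (fun T hT => by
      rw [(Finset.mem_powersetCard.mp hT).2]), sum_const, card_powersetCard, hcard,
      nsmul_eq_mul]
  rw [Finset.sum_congr rfl hstep]
  -- now pure binomial computation
  have key : ∀ j : ℕ, ((n-1).choose j : ℝ) * (1 / ((j + 1 : ℕ) : ℝ)) = (n.choose (j+1) : ℝ) / n := by
    intro j
    have h := Nat.add_one_mul_choose_eq (n-1) j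
    rw [Nat.sub_add_cancel hn] at h
    have h' : (n : ℝ) * ((n-1).choose j : ℝ) = (n.choose (j+1) : ℝ) * ((j:ℝ) + 1) := by
      exact_mod_cast h
    have hn0 : (n : ℝ) ≠ 0 := Nat.cast_ne_zero.mpr (by omega)
    have hj0 : ((j:ℝ) + 1) ≠ 0 := by positivity
    field_simp
    push_cast
    linarith [h']
  have : ∀ j ∈ Finset.range (n - 1 + 1),
      ((n-1).choose j : ℝ) * (q ^ (j + 1) * (1 - q) ^ (n - (j + 1)) * (1 / ((j + 1 : ℕ) : ℝ)))
      = (1/(n:ℝ)) * ((n.choose (j+1) : ℝ) * (q ^ (j + 1) * (1 - q) ^ (n - (j + 1)))) := by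
    intro j hj
    rw [show ((n-1).choose j : ℝ) * (q ^ (j + 1) * (1 - q) ^ (n - (j + 1)) * (1 / ((j + 1 : ℕ) : ℝ))) = (((n-1).choose j : ℝ) * (1 / ((j + 1 : ℕ) : ℝ))) * (q ^ (j + 1) * (1 - q) ^ (n - (j + 1))) from by ring, key j]
    ring
  rw [Finset.sum_congr rfl this, ← Finset.mul_sum]
  have hbin : ∑ j ∈ Finset.range (n - 1 + 1),
      ((n.choose (j+1) : ℝ) * (q ^ (j + 1) * (1 - q) ^ (n - (j + 1)))) = 1 - (1-q)^n := by
    have hpow : (q + (1 - q)) ^ n = ∑ s ∈ Finset.range (n + 1), q ^ s * (1 - q) ^ (n - s) * (n.choose s : ℝ) :=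
      add_pow q (1-q) n
    have h1 : (1:ℝ) = ∑ s ∈ Finset.range (n + 1), q ^ s * (1 - q) ^ (n - s) * (n.choose s : ℝ) := by
      rw [← hpow]; norm_num
    have hsplit : ∑ s ∈ Finset.range (n + 1), q ^ s * (1 - q) ^ (n - s) * (n.choose s : ℝ)
        = (1-q)^n + ∑ j ∈ Finset.range n, q ^ (j+1) * (1 - q) ^ (n - (j+1)) * (n.choose (j+1) : ℝ) := by
      rw [Finset.sum_range_succ']
      simp
      ring
    have hn1 : n - 1 + 1 = n := Nat.succ_pred_eq_of_pos hn
    rw [hn1]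
    rw [hsplit] at h1
    have := h1
    rw [Finset.sum_congr rfl (fun j _ => by ring : ∀ j ∈ Finset.range n,
      ((n.choose (j+1) : ℝ) * (q ^ (j + 1) * (1 - q) ^ (n - (j + 1))))
      = q ^ (j+1) * (1 - q) ^ (n - (j+1)) * (n.choose (j+1) : ℝ))]
    linarith
  rw [hbin]
  ring

/-- Under a uniform participation probability `q`, the aggregation weights are uniform:
`∑_{S ≠ ∅} q^{|S|} (1-q)^{n-|S|} (1/|S|) ∑_{k∈S} g k = ((1 - (1-q)^n)/n) • ∑_k g k`. -/
theorem uniform_aggregation_weights (V : Type*) [AddCommGroup V] [Module ℝ V]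
    (n : ℕ) (hn : 1 ≤ n) (g : Fin n → V) (q : ℝ) :
    ∑ S ∈ (Finset.univ : Finset (Fin n)).powerset.filter (fun S => S ≠ ∅),
        (q ^ S.card * (1 - q) ^ (n - S.card) * (1 / (S.card : ℝ))) • ∑ k ∈ S, g k
      = ((1 - (1 - q) ^ n) / (n : ℝ)) • ∑ k : Fin n, g k := by
  set c : Finset (Fin n) → ℝ := fun S => q ^ S.card * (1 - q) ^ (n - S.card) * (1 / (S.card : ℝ))
    with hc
  calc ∑ S ∈ (Finset.univ : Finset (Fin n)).powerset.filter (fun S => S ≠ ∅),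
        c S • ∑ k ∈ S, g k
      = ∑ S ∈ (Finset.univ : Finset (Fin n)).powerset.filter (fun S => S ≠ ∅),
        ∑ k : Fin n, (if k ∈ S then c S • g k else 0) := by
        refine Finset.sum_congr rfl fun S hS => ?_
        rw [Finset.smul_sum, Finset.sum_ite_mem, univ_inter]
    _ = ∑ k : Fin n, ∑ S ∈ (Finset.univ : Finset (Fin n)).powerset.filter (fun S => S ≠ ∅),
        (if k ∈ S then c S • g k else 0) := Finset.sum_comm
    _ = ∑ k : Fin n, (∑ S ∈ (Finset.univ : Finset (Fin n)).powerset.filter (fun S => k ∈ S),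
        c S) • g k := by
        refine Finset.sum_congr rfl fun k _ => ?_
        have h1 : ∑ S ∈ (Finset.univ : Finset (Fin n)).powerset.filter (fun S => S ≠ ∅),
            (if k ∈ S then c S • g k else 0)
            = ∑ S ∈ (Finset.univ : Finset (Fin n)).powerset, (if k ∈ S then c S • g k else 0) := by
          apply Finset.sum_subset (Finset.filter_subset _ _)
          intro S hS hS'
          simp only [Finset.mem_filter, hS, true_and, not_not] at hS'
          simp [hS']
        rw [h1, ← Finset.sum_filter, Finset.sum_smul]
    _ = ∑ k : Fin n, ((1 - (1 - q) ^ n) / n) • g k := by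
        refine Finset.sum_congr rfl fun k _ => ?_
        rw [hc, coeff_sum n hn q k]
    _ = ((1 - (1 - q) ^ n) / (n : ℝ)) • ∑ k : Fin n, g k := by rw [Finset.smul_sum]
end

section
/- Let n ≥ 1, c : {1,…,n} → ℝ, and q ∈ ℝ. Then ∑_{S ⊆ {1,…,n}, S ≠ ∅} q^{|S|} (1−q)^{n−|S|} · (1/|S|²) · ∑_{k∈S} c_k = (1/n) · ( ∑_{l=1}^n (1/l)·C(n,l)·q^l (1−q)^{n−l} ) · ∑_{k=1}^n c_k, where C(n,l) is the binomial coefficient. -/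
open Finset

lemma count_subsets_containing (n : ℕ) (k : Fin n) (l : ℕ) (hl : 1 ≤ l) :
    ((Finset.univ : Finset (Fin n)).powerset.filter
        (fun S => k ∈ S ∧ S.card = l)).card = (n - 1).choose (l - 1) := by
  have : ((Finset.univ : Finset (Fin n)).powerset.filter
        (fun S => k ∈ S ∧ S.card = l)).card
      = (Finset.powersetCard (l - 1) ((Finset.univ : Finset (Fin n)).erase k)).card := by
    apply Finset.card_nbij' (fun S => S.erase k) (fun T => insert k T)
    · intro S hS
      simp only [mem_coe, mem_filter, mem_powerset] at hS
      simp only [mem_coe, mem_powersetCard]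
      refine ⟨Finset.erase_subset_erase _ hS.1, ?_⟩
      rw [Finset.card_erase_of_mem hS.2.1, hS.2.2]
    · intro T hT
      simp only [mem_coe, mem_powersetCard] at hT
      have hkT : k ∉ T := fun h => (Finset.mem_erase.mp (hT.1 h)).1 rfl
      simp only [mem_coe, mem_filter, mem_powerset]
      refine ⟨Finset.subset_univ _, Finset.mem_insert_self _ _, ?_⟩
      rw [Finset.card_insert_of_notMem hkT, hT.2]
      omega
    · intro S hS
      simp only [mem_coe, mem_filter, mem_powerset] at hS
      exact Finset.insert_erase hS.2.1
    · intro T hT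
      simp only [mem_coe, mem_powersetCard] at hT
      have hkT : k ∉ T := fun h => (Finset.mem_erase.mp (hT.1 h)).1 rfl
      exact Finset.erase_insert hkT
  rw [this, Finset.card_powersetCard, Finset.card_erase_of_mem (Finset.mem_univ k),
    Finset.card_univ, Fintype.card_fin]

/-- Evaluation of the second-moment weights under a uniform participation probability `q`:
`∑_{S ≠ ∅} q^{|S|}(1-q)^{n-|S|} (1/|S|²) ∑_{k∈S} c k
  = (1/n)·(∑_{l=1}^n (1/l) C(n,l) q^l (1-q)^{n-l})·∑_k c k`. -/
theorem uniform_second_moment_weights (n : ℕ) (hn : 1 ≤ n) (c : Fin n → ℝ) (q : ℝ) :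
    ∑ S ∈ (Finset.univ : Finset (Fin n)).powerset.filter (fun S => S ≠ ∅),
        q ^ S.card * (1 - q) ^ (n - S.card) * (1 / (S.card : ℝ) ^ 2) * ∑ k ∈ S, c k
      = (1 / (n : ℝ)) *
          (∑ l ∈ Finset.Icc 1 n, (1 / (l : ℝ)) * (n.choose l : ℝ) * q ^ l * (1 - q) ^ (n - l)) *
          ∑ k : Fin n, c k := by
  set g : ℕ → ℝ := fun m => q ^ m * (1 - q) ^ (n - m) * (1 / (m : ℝ) ^ 2) with hg
  set A := (Finset.univ : Finset (Fin n)).powerset.filter (fun S => S ≠ ∅) with hA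
  -- key per-element sum
  have key : ∀ k : Fin n,
      ∑ S ∈ (Finset.univ : Finset (Fin n)).powerset.filter (fun S => k ∈ S), g S.card
        = (1 / (n : ℝ)) *
          ∑ l ∈ Finset.Icc 1 n, (1 / (l : ℝ)) * (n.choose l : ℝ) * q ^ l * (1 - q) ^ (n - l) := by
    intro k
    have hmaps : ∀ S ∈ (Finset.univ : Finset (Fin n)).powerset.filter (fun S => k ∈ S),
        S.card ∈ Finset.Icc 1 n := by
      intro S hS
      simp only [mem_coe, mem_filter, mem_powerset] at hS
      rw [Finset.mem_Icc]
      exact ⟨Finset.card_pos.mpr ⟨k, hS.2⟩,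
        (Finset.card_le_card hS.1).trans_eq (by simp)⟩
    rw [← Finset.sum_fiberwise_of_maps_to hmaps (fun S => g S.card)]
    rw [Finset.mul_sum]
    apply Finset.sum_congr rfl
    intro l hl
    rw [Finset.mem_Icc] at hl
    have hsum : ∑ S ∈ ((Finset.univ : Finset (Fin n)).powerset.filter
          (fun S => k ∈ S)).filter (fun S => S.card = l), g S.card
        = ((n - 1).choose (l - 1) : ℝ) * g l := by
      rw [Finset.filter_filter]
      calc ∑ S ∈ (Finset.univ : Finset (Fin n)).powerset.filter
            (fun S => k ∈ S ∧ S.card = l), g S.card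
          = ∑ _S ∈ (Finset.univ : Finset (Fin n)).powerset.filter
            (fun S => k ∈ S ∧ S.card = l), g l :=
            Finset.sum_congr rfl (fun S hS => by
              rw [(Finset.mem_filter.mp hS).2.2])
        _ = ((n - 1).choose (l - 1) : ℝ) * g l := by
            rw [Finset.sum_const, count_subsets_containing n k l hl.1, nsmul_eq_mul]
    rw [hsum, hg]
    have hcast : (n : ℝ) * ((n - 1).choose (l - 1) : ℝ) = (n.choose l : ℝ) * (l : ℝ) := by
      have h := Nat.add_one_mul_choose_eq (n - 1) (l - 1)
      simp only [Nat.succ_eq_add_one, Nat.sub_add_cancel hn, Nat.sub_add_cancel hl.1] at h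
      exact_mod_cast congrArg (Nat.cast : ℕ → ℝ) h
    have hn0 : (n : ℝ) ≠ 0 := Nat.cast_ne_zero.mpr (by omega)
    have hl0 : (l : ℝ) ≠ 0 := Nat.cast_ne_zero.mpr (by omega)
    field_simp
    linear_combination (q ^ l * (1 - q) ^ (n - l)) * hcast
  -- swap sums
  have swap : ∑ S ∈ A, g S.card * ∑ k ∈ S, c k
      = ∑ k : Fin n, (∑ S ∈ (Finset.univ : Finset (Fin n)).powerset.filter
          (fun S => k ∈ S), g S.card) * c k := by
    have h1 : ∀ S ∈ A, g S.card * ∑ k ∈ S, c k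
        = ∑ k : Fin n, if k ∈ S then g S.card * c k else 0 := by
      intro S _
      rw [Finset.mul_sum, Finset.sum_ite_mem, Finset.univ_inter]
    rw [Finset.sum_congr rfl h1, Finset.sum_comm]
    apply Finset.sum_congr rfl
    intro k _
    rw [Finset.sum_mul, ← Finset.sum_filter]
    apply Finset.sum_congr
    · rw [hA, Finset.filter_filter]
      apply Finset.filter_congr
      intro S _
      constructor
      · exact fun h => h.2
      · exact fun h => ⟨Finset.ne_empty_of_mem h, h⟩
    · exact fun _ _ => rfl
  calc ∑ S ∈ A, q ^ S.card * (1 - q) ^ (n - S.card) * (1 / (S.card : ℝ) ^ 2) * ∑ k ∈ S, c k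
      = ∑ S ∈ A, g S.card * ∑ k ∈ S, c k := rfl
    _ = ∑ k : Fin n, (∑ S ∈ (Finset.univ : Finset (Fin n)).powerset.filter
          (fun S => k ∈ S), g S.card) * c k := swap
    _ = ∑ k : Fin n, ((1 / (n : ℝ)) *
          (∑ l ∈ Finset.Icc 1 n, (1 / (l : ℝ)) * (n.choose l : ℝ) * q ^ l * (1 - q) ^ (n - l)))
          * c k := by
        apply Finset.sum_congr rfl
        intro k _
        rw [key k]
    _ = _ := by rw [← Finset.mul_sum]
end

section
/- For every integer n ≥ 1 and every real q with 0 < q ≤ 1, it holds that ∑_{l=1}^n (1/l)·C(n,l)·q^l·(1−q)^{n−l} ≤ 2/(n·q), where C(n,l) is the binomial coefficient. -/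
open Finset

lemma choose_succ_real (n l : ℕ) :
    ((n:ℝ)+1) * (n.choose l : ℝ) = ((n+1).choose (l+1) : ℝ) * ((l:ℝ)+1) := by
  exact_mod_cast Nat.add_one_mul_choose_eq n l

/-- Bound on the expected reciprocal of a positive binomial count:
`∑_{l=1}^n (1/l) C(n,l) q^l (1-q)^{n-l} ≤ 2/(n q)` for `0 < q ≤ 1`. -/
theorem binomial_reciprocal_bound (n : ℕ) (hn : 1 ≤ n) (q : ℝ) (hq0 : 0 < q) (hq1 : q ≤ 1) :
    ∑ l ∈ Finset.Icc 1 n, (1 / (l : ℝ)) * (n.choose l : ℝ) * q ^ l * (1 - q) ^ (n - l)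
      ≤ 2 / ((n : ℝ) * q) := by
  have h1q : (0:ℝ) ≤ 1 - q := by linarith
  have hn1 : (0:ℝ) < (n:ℝ) + 1 := by positivity
  have step1 : ∑ l ∈ Finset.Icc 1 n, (1 / (l : ℝ)) * (n.choose l : ℝ) * q ^ l * (1 - q) ^ (n - l)
      ≤ ∑ l ∈ Finset.Icc 1 n,
        (2 / (((n:ℝ)+1) * q)) * (((n+1).choose (l+1) : ℝ) * q ^ (l+1) * (1 - q) ^ ((n+1) - (l+1))) := by
    apply Finset.sum_le_sum
    intro l hl
    obtain ⟨hl1, hln⟩ := Finset.mem_Icc.mp hl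
    have hlpos : (0:ℝ) < l := by exact_mod_cast hl1
    have hl1' : (1:ℝ) ≤ (l:ℝ) := by exact_mod_cast hl1
    have h12 : (1 / (l:ℝ)) ≤ 2 / ((l:ℝ) + 1) := by
      rw [div_le_div_iff₀ hlpos (by linarith)]
      linarith
    have hnl : (n+1) - (l+1) = n - l := by omega
    rw [hnl]
    have hrhs : (2 / (((n:ℝ)+1) * q)) * (((n+1).choose (l+1) : ℝ) * q ^ (l+1) * (1 - q) ^ (n - l))
        = (2 / ((l:ℝ)+1)) * (n.choose l : ℝ) * q ^ l * (1 - q) ^ (n - l) := by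
      have hc := choose_succ_real n l
      have hC' : (((n+1).choose (l+1) : ℝ)) = ((n:ℝ)+1) * (n.choose l : ℝ) / ((l:ℝ)+1) := by
        field_simp
        linarith [hc]
      rw [hC', pow_succ q l]
      field_simp
    rw [hrhs]
    gcongr
  have step2 : ∑ l ∈ Finset.Icc 1 n,
        (2 / (((n:ℝ)+1) * q)) * (((n+1).choose (l+1) : ℝ) * q ^ (l+1) * (1 - q) ^ ((n+1) - (l+1)))
      ≤ 2 / (((n:ℝ)+1) * q) := by
    rw [← Finset.mul_sum]
    have hS : ∑ l ∈ Finset.Icc 1 n,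
        (((n+1).choose (l+1) : ℝ) * q ^ (l+1) * (1 - q) ^ ((n+1) - (l+1))) ≤ 1 := by
      have hmap : ∑ l ∈ Finset.Icc 1 n,
          (((n+1).choose (l+1) : ℝ) * q ^ (l+1) * (1 - q) ^ ((n+1) - (l+1)))
          = ∑ j ∈ Finset.Icc 2 (n+1), (((n+1).choose j : ℝ) * q ^ j * (1 - q) ^ ((n+1) - j)) := by
        rw [show Finset.Icc 2 (n+1) = Finset.map ⟨(· + 1), add_left_injective 1⟩ (Finset.Icc 1 n) by
          ext x
          simp only [Finset.mem_map, Finset.mem_Icc, Function.Embedding.coeFn_mk]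
          constructor
          · rintro ⟨h2, hx⟩; exact ⟨x - 1, ⟨by omega, by omega⟩, by omega⟩
          · rintro ⟨a, ⟨ha1, ha2⟩, rfl⟩; omega, Finset.sum_map]
        rfl
      rw [hmap]
      have hsub : Finset.Icc 2 (n+1) ⊆ Finset.range (n+2) := by
        intro x hx
        simp only [Finset.mem_Icc] at hx
        simp only [Finset.mem_range]
        omega
      have hle : ∑ j ∈ Finset.Icc 2 (n+1), (((n+1).choose j : ℝ) * q ^ j * (1 - q) ^ ((n+1) - j))
          ≤ ∑ j ∈ Finset.range (n+2), (((n+1).choose j : ℝ) * q ^ j * (1 - q) ^ ((n+1) - j)) := by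
        apply Finset.sum_le_sum_of_subset_of_nonneg hsub
        intro i _ _; positivity
      have hbin : ∑ j ∈ Finset.range (n+2), (((n+1).choose j : ℝ) * q ^ j * (1 - q) ^ ((n+1) - j)) = 1 := by
        have := add_pow q (1-q) (n+1)
        simp only [show q + (1-q) = 1 by ring, one_pow] at this
        conv_rhs => rw [this]
        apply Finset.sum_congr (by norm_num)
        intro j hj
        ring
      linarith
    calc 2 / (((n:ℝ)+1) * q) * ∑ l ∈ Finset.Icc 1 n,
            (((n+1).choose (l+1) : ℝ) * q ^ (l+1) * (1 - q) ^ ((n+1) - (l+1)))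
        ≤ 2 / (((n:ℝ)+1) * q) * 1 := by
          apply mul_le_mul_of_nonneg_left hS (by positivity)
      _ = 2 / (((n:ℝ)+1) * q) := by ring
  have step3 : 2 / (((n:ℝ)+1) * q) ≤ 2 / ((n:ℝ) * q) := by
    apply div_le_div_of_nonneg_left (by norm_num) (by positivity)
    have : (1:ℝ) ≤ (n:ℝ) := by exact_mod_cast hn
    nlinarith
  linarith
end

section
/- Let E be a real inner product space, S a finite set, a : S → E, q : S → ℝ, and q̄ ∈ ℝ. Then ∑_{k∈S} ∑_{k'∈S, k'≠k} q_k·q_{k'}·⟨a_k, a_{k'}⟩ ≤ 2·(|S| − 1)·∑_{k∈S} ((q_k − q̄)² + q̄²)·‖a_k‖². -/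
open Finset

/-- Deterministic cross-term bound: for vectors `a k` and reals `q k`, `q̄`,
`∑_{k∈S} ∑_{k'∈S, k'≠k} q_k q_{k'} ⟨a_k, a_{k'}⟩
  ≤ 2(|S|-1) ∑_{k∈S} ((q_k - q̄)² + q̄²) ‖a_k‖²`. -/
theorem cross_term_bound {E : Type*} [NormedAddCommGroup E] [InnerProductSpace ℝ E]
    {ι : Type*} [DecidableEq ι] (S : Finset ι) (a : ι → E) (q : ι → ℝ) (qbar : ℝ) :
    ∑ k ∈ S, ∑ k' ∈ S.erase k, q k * q k' * (inner ℝ (a k) (a k') : ℝ)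
      ≤ 2 * ((S.card : ℝ) - 1) * ∑ k ∈ S, ((q k - qbar) ^ 2 + qbar ^ 2) * ‖a k‖ ^ 2 := by
  set f : ι → ℝ := fun k => q k ^ 2 * ‖a k‖ ^ 2 with hf
  have step1 : ∑ k ∈ S, ∑ k' ∈ S.erase k, q k * q k' * (inner ℝ (a k) (a k') : ℝ)
      ≤ ∑ k ∈ S, ∑ k' ∈ S.erase k, (f k + f k') / 2 := by
    refine Finset.sum_le_sum fun k hk => Finset.sum_le_sum fun k' hk' => ?_
    have h : q k * q k' * (inner ℝ (a k) (a k') : ℝ)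
        = inner ℝ (q k • a k) (q k' • a k') := by
      rw [real_inner_smul_left, real_inner_smul_right]; ring
    have h2 := real_inner_le_norm (q k • a k) (q k' • a k')
    have h3 : ‖q k • a k‖ * ‖q k' • a k'‖
        ≤ (‖q k • a k‖ ^ 2 + ‖q k' • a k'‖ ^ 2) / 2 := by nlinarith [sq_nonneg (‖q k • a k‖ - ‖q k' • a k'‖)]
    have h4 : (‖q k • a k‖ ^ 2 + ‖q k' • a k'‖ ^ 2) / 2 = (f k + f k') / 2 := by
      simp [hf, norm_smul, mul_pow]
    linarith [h.symm ▸ h2.trans h3, h4 ▸ le_refl ((f k + f k') / 2)]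
  have step2 : ∑ k ∈ S, ∑ k' ∈ S.erase k, (f k + f k') / 2
      = ((S.card : ℝ) - 1) * ∑ k ∈ S, f k := by
    have h1 : ∀ k ∈ S, ∑ k' ∈ S.erase k, (f k + f k') / 2
        = (((S.card : ℝ) - 1) * f k + (∑ k' ∈ S, f k' - f k)) / 2 := by
      intro k hk
      have hcard : ((S.erase k).card : ℝ) = (S.card : ℝ) - 1 := by
        rw [Finset.card_erase_of_mem hk]
        have : 1 ≤ S.card := Finset.card_pos.mpr ⟨k, hk⟩
        push_cast [this]; ring
      calc ∑ k' ∈ S.erase k, (f k + f k') / 2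
          = ∑ k' ∈ S.erase k, (f k / 2 + f k' / 2) :=
            Finset.sum_congr rfl fun _ _ => by ring
        _ = (S.erase k).card • (f k / 2) + ∑ k' ∈ S.erase k, f k' / 2 := by
            rw [Finset.sum_add_distrib, Finset.sum_const]
        _ = ((S.card : ℝ) - 1) * (f k / 2) + (∑ k' ∈ S, f k' - f k) / 2 := by
            rw [← Finset.sum_div, Finset.sum_erase_eq_sub hk, nsmul_eq_mul, hcard]
        _ = (((S.card : ℝ) - 1) * f k + (∑ k' ∈ S, f k' - f k)) / 2 := by ring
    rw [Finset.sum_congr rfl h1, ← Finset.sum_div, Finset.sum_add_distrib,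
      Finset.sum_sub_distrib, ← Finset.mul_sum, Finset.sum_const, nsmul_eq_mul]
    ring
  have step3 : ∑ k ∈ S, f k ≤ 2 * ∑ k ∈ S, ((q k - qbar) ^ 2 + qbar ^ 2) * ‖a k‖ ^ 2 := by
    rw [Finset.mul_sum]
    refine Finset.sum_le_sum fun k _ => ?_
    have h5 : q k ^ 2 ≤ 2 * ((q k - qbar) ^ 2 + qbar ^ 2) := by
      nlinarith [sq_nonneg (q k - 2 * qbar)]
    have hfk : f k = q k ^ 2 * ‖a k‖ ^ 2 := rfl
    rw [hfk]
    nlinarith [mul_le_mul_of_nonneg_right h5 (sq_nonneg ‖a k‖)]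
  calc ∑ k ∈ S, ∑ k' ∈ S.erase k, q k * q k' * (inner ℝ (a k) (a k') : ℝ)
      ≤ ((S.card : ℝ) - 1) * ∑ k ∈ S, f k := by rw [← step2]; exact step1
    _ ≤ 2 * ((S.card : ℝ) - 1) * ∑ k ∈ S, ((q k - qbar) ^ 2 + qbar ^ 2) * ‖a k‖ ^ 2 := by
        rcases S.eq_empty_or_nonempty with h | h
        · simp [h]
        · have hc : (1:ℝ) ≤ S.card := by exact_mod_cast Finset.card_pos.mpr h
          have := mul_le_mul_of_nonneg_left step3 (by linarith : (0:ℝ) ≤ (S.card : ℝ) - 1)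
          linarith
end

section
/- Let E be a real inner product space, ι a finite index set, α : ι → ℝ with ∑_{k∈ι} α_k = 1, a ∈ E, and b, c : ι → E. Then −⟨a, ∑_{k∈ι} α_k b_k⟩ ≤ −(1/2)·‖a‖² + (∑_{k∈ι} α_k²)·( ∑_{k∈ι} ‖a − c_k‖² + ∑_{k∈ι} ‖c_k − b_k‖² ). -/
open Finset

/-- Deterministic inner-product chain underlying the descent lemma: for weights `α` summing
to one, `-⟨a, ∑_k α_k b_k⟩ ≤ -(1/2)‖a‖² + (∑_k α_k²)(∑_k ‖a - c_k‖² + ∑_k ‖c_k - b_k‖²)`. -/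
theorem descent_inner_product_bound {E : Type*} [NormedAddCommGroup E] [InnerProductSpace ℝ E]
    {ι : Type*} [Fintype ι] (α : ι → ℝ) (hα : ∑ k : ι, α k = 1) (a : E) (b c : ι → E) :
    -(inner ℝ a (∑ k : ι, α k • b k) : ℝ)
      ≤ -(1 / 2) * ‖a‖ ^ 2 +
          (∑ k : ι, α k ^ 2) *
            ((∑ k : ι, ‖a - c k‖ ^ 2) + ∑ k : ι, ‖c k - b k‖ ^ 2) := by
  set s : E := ∑ k : ι, α k • b k with hs
  -- polarization-type bound
  have hpol : ‖a - s‖ ^ 2 = ‖a‖ ^ 2 - 2 * (inner ℝ a s : ℝ) + ‖s‖ ^ 2 := by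
    have := @norm_sub_sq_real E _ _ a s
    linarith
  have h1 : -(inner ℝ a s : ℝ) ≤ -(1 / 2) * ‖a‖ ^ 2 + (1 / 2) * ‖a - s‖ ^ 2 := by
    nlinarith [sq_nonneg ‖s‖]
  -- rewrite a - s
  have h2 : a - s = ∑ k : ι, α k • (a - b k) := by
    simp only [smul_sub, Finset.sum_sub_distrib, ← Finset.sum_smul, hα, one_smul, hs]
  have h3 : ‖a - s‖ ≤ ∑ k : ι, |α k| * ‖a - b k‖ := by
    rw [h2]
    refine (norm_sum_le _ _).trans ?_
    apply Finset.sum_le_sum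
    intro k _
    rw [norm_smul, Real.norm_eq_abs]
  have h4 : (∑ k : ι, |α k| * ‖a - b k‖) ^ 2
      ≤ (∑ k : ι, α k ^ 2) * (∑ k : ι, ‖a - b k‖ ^ 2) := by
    have h := Finset.sum_mul_sq_le_sq_mul_sq Finset.univ (fun k => |α k|) (fun k => ‖a - b k‖)
    simpa [sq_abs] using h
  have h5 : ‖a - s‖ ^ 2 ≤ (∑ k : ι, α k ^ 2) * (∑ k : ι, ‖a - b k‖ ^ 2) := by
    have hnn : (0:ℝ) ≤ ∑ k : ι, |α k| * ‖a - b k‖ :=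
      Finset.sum_nonneg fun k _ => mul_nonneg (abs_nonneg _) (norm_nonneg _)
    calc ‖a - s‖ ^ 2 ≤ (∑ k : ι, |α k| * ‖a - b k‖) ^ 2 := by
          exact pow_le_pow_left₀ (norm_nonneg _) h3 2
      _ ≤ _ := h4
  have h6 : (∑ k : ι, ‖a - b k‖ ^ 2)
      ≤ ∑ k : ι, (2 * ‖a - c k‖ ^ 2 + 2 * ‖c k - b k‖ ^ 2) := by
    apply Finset.sum_le_sum
    intro k _
    have : ‖a - b k‖ ≤ ‖a - c k‖ + ‖c k - b k‖ := by
      have := norm_add_le (a - c k) (c k - b k)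
      simpa using this
    nlinarith [norm_nonneg (a - b k), norm_nonneg (a - c k), norm_nonneg (c k - b k),
      sq_nonneg (‖a - c k‖ - ‖c k - b k‖)]
  have hα2 : (0:ℝ) ≤ ∑ k : ι, α k ^ 2 := Finset.sum_nonneg fun k _ => sq_nonneg _
  have h7 : ‖a - s‖ ^ 2 ≤ (∑ k : ι, α k ^ 2) *
      (2 * (∑ k : ι, ‖a - c k‖ ^ 2) + 2 * ∑ k : ι, ‖c k - b k‖ ^ 2) := by
    refine h5.trans ?_
    apply mul_le_mul_of_nonneg_left _ hα2
    simpa [Finset.sum_add_distrib, Finset.mul_sum] using h6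
  nlinarith [h1, h7]
end

section
/- Let ψ > 0, ζ > 0, H > 0, D > 0, K₀ > 0, α > 0, η₂ > η₁ > 0, p > 0, B > 0, N₀ > 0. For q ∈ (0,1) define θ_s(q) = ψ − (1/ζ)·(ln(1/q − 1) − ln ψ), x(q) = D − H/tan(θ_s(q)·π/180), d(q) = √(x(q)² + H²), θ_c(q) = (180/π)·arctan(H/x(q)), q_c(q) = 1/(1 + ψ·exp(−ζ·(θ_c(q) − ψ))), h(q) = (K₀·d(q))^{−α} / (η₁·q_c(q) + η₂·(1 − q_c(q))), and r(q) = B·log(1 + p·h(q)/(B·N₀)). Then on any interval I ⊆ (0,1) such that 0 < θ_s(q) < 90 and x(q) > 0 for all q ∈ I, the function r is strictly decreasing. -/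
/-!
A larger sensing probability `q` requires a steeper sensing elevation angle `θ_s`, so the UAV
hovers closer to the target and hence farther from the server: the offset `x` grows. This both
lengthens the link `d` and flattens the communication elevation angle `θ_c`, which lowers the LOS
probability `q_c` and so raises the excessive path loss. Both effects shrink the channel gain `h`,
and the rate is increasing in `h`.
-/

open Real Set

lemma strictAntiOn_log_one_div_sub_one : StrictAntiOn (fun q : ℝ => log (1 / q - 1)) (Ioo 0 1) := by
  intro a ⟨ha₀, _⟩ b ⟨hb₀, hb₁⟩ hab
  have hb : 0 < 1 / b - 1 := by linarith [one_lt_one_div hb₀ hb₁]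
  exact log_lt_log hb (by linarith [one_div_lt_one_div_of_lt ha₀ hab])

lemma strictMonoOn_sensingAngle {ψ ζ : ℝ} (hζ : 0 < ζ) :
    StrictMonoOn (fun q => ψ - (1 / ζ) * (log (1 / q - 1) - log ψ)) (Ioo 0 1) := by
  intro a ha b hb hab
  have hlog := strictAntiOn_log_one_div_sub_one ha hb hab
  dsimp only
  gcongr

lemma mul_pi_div_180_mem_Ioo {θ : ℝ} (hθ : θ ∈ Ioo 0 90) : θ * π / 180 ∈ Ioo 0 (π / 2) := by
  obtain ⟨h₀, h₉₀⟩ := hθ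
  constructor <;> nlinarith [pi_pos]

lemma strictMonoOn_horizontalOffset (D : ℝ) {H : ℝ} (hH : 0 < H) :
    StrictMonoOn (fun θ => D - H / tan (θ * π / 180)) (Ioo 0 90) := by
  intro a ha b hb hab
  have ha' := mul_pi_div_180_mem_Ioo ha
  have hb' := mul_pi_div_180_mem_Ioo hb
  have htan : tan (a * π / 180) < tan (b * π / 180) :=
    strictMonoOn_tan ⟨by linarith [ha'.1, pi_pos], ha'.2⟩ ⟨by linarith [hb'.1, pi_pos], hb'.2⟩
      (by gcongr)
  have hdiv := div_lt_div_of_pos_left hH (tan_pos_of_pos_of_lt_pi_div_two ha'.1 ha'.2) htan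
  dsimp only
  linarith

lemma strictMonoOn_sqrt_sq_add_sq (H : ℝ) : StrictMonoOn (fun x => √(x ^ 2 + H ^ 2)) (Ici 0) :=
  fun _ ha _ _ hab => sqrt_lt_sqrt (by positivity) (by gcongr)

lemma strictAntiOn_elevationAngle {H : ℝ} (hH : 0 < H) :
    StrictAntiOn (fun x => (180 / π) * arctan (H / x)) (Ioi 0) := by
  intro a ha b _ hab
  have harctan := arctan_strictMono (div_lt_div_of_pos_left hH ha hab)
  dsimp only
  gcongr

lemma strictMono_losProbability {ψ ζ : ℝ} (hψ : 0 < ψ) (hζ : 0 < ζ) :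
    StrictMono (fun θ => 1 / (1 + ψ * exp (-ζ * (θ - ψ)))) := by
  intro a b hab
  have hexp : exp (-ζ * (b - ψ)) < exp (-ζ * (a - ψ)) := exp_lt_exp.2 (by nlinarith)
  dsimp only
  gcongr

lemma losProbability_lt_one {ψ : ℝ} (hψ : 0 < ψ) (ζ θ : ℝ) :
    1 / (1 + ψ * exp (-ζ * (θ - ψ))) < 1 := by
  rw [div_lt_one (by positivity)]
  linarith [mul_pos hψ (exp_pos (-ζ * (θ - ψ)))]

lemma excessLoss_pos {η₁ η₂ c : ℝ} (hη₁ : 0 < η₁) (hη : η₁ < η₂) (hc : c ≤ 1) :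
    0 < η₁ * c + η₂ * (1 - c) := by
  nlinarith

lemma channelGain_lt {K₀ α η₁ η₂ d₁ d₂ c₁ c₂ : ℝ} (hK₀ : 0 < K₀) (hα : 0 < α) (hη₁ : 0 < η₁)
    (hη : η₁ < η₂) (hd₁ : 0 < d₁) (hd : d₁ < d₂) (hc : c₂ < c₁) (hc₁ : c₁ ≤ 1) :
    (K₀ * d₂) ^ (-α) / (η₁ * c₂ + η₂ * (1 - c₂)) < (K₀ * d₁) ^ (-α) / (η₁ * c₁ + η₂ * (1 - c₁)) :=
  div_lt_div₀ (rpow_lt_rpow_of_neg (by positivity) (by gcongr) (by linarith))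
    (by nlinarith) (by positivity) (excessLoss_pos hη₁ hη hc₁)

lemma strictMonoOn_rate {p B N₀ : ℝ} (hp : 0 < p) (hB : 0 < B) (hN₀ : 0 < N₀) :
    StrictMonoOn (fun g => B * log (1 + p * g / (B * N₀))) (Ici 0) := by
  intro a (ha : 0 ≤ a) b _ hab
  dsimp only
  gcongr

theorem rate_strictly_decreasing_general (ψ ζ H D K₀ α η₁ η₂ p B N₀ : ℝ)
    (hψ : 0 < ψ) (hζ : 0 < ζ) (hH : 0 < H) (hK₀ : 0 < K₀) (hα : 0 < α)
    (hη₁ : 0 < η₁) (hη : η₁ < η₂) (hp : 0 < p) (hB : 0 < B) (hN₀ : 0 < N₀)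
    (θs x d θc qc h r : ℝ → ℝ)
    (hθs : ∀ q, θs q = ψ - (1 / ζ) * (Real.log (1 / q - 1) - Real.log ψ))
    (hx : ∀ q, x q = D - H / Real.tan (θs q * Real.pi / 180))
    (hd : ∀ q, d q = Real.sqrt ((x q) ^ 2 + H ^ 2))
    (hθc : ∀ q, θc q = (180 / Real.pi) * Real.arctan (H / x q))
    (hqc : ∀ q, qc q = 1 / (1 + ψ * Real.exp (-ζ * (θc q - ψ))))
    (hh : ∀ q, h q = (K₀ * d q) ^ (-α) / (η₁ * qc q + η₂ * (1 - qc q)))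
    (hr : ∀ q, r q = B * Real.log (1 + p * h q / (B * N₀)))
    (I : Set ℝ) (hI : I ⊆ Set.Ioo 0 1)
    (hIθ : ∀ q ∈ I, 0 < θs q ∧ θs q < 90) (hIx : ∀ q ∈ I, 0 < x q) :
    StrictAntiOn r I := by
  intro a ha b hb hab
  have hθs_lt : θs a < θs b := by
    simpa only [hθs] using strictMonoOn_sensingAngle hζ (hI ha) (hI hb) hab
  have hx_lt : x a < x b := by
    simpa only [hx] using strictMonoOn_horizontalOffset D hH (hIθ a ha) (hIθ b hb) hθs_lt
  have hd_pos : 0 < d a := by rw [hd]; exact sqrt_pos.2 (by positivity)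
  have hd_lt : d a < d b := by
    simpa only [hd] using
      strictMonoOn_sqrt_sq_add_sq H (hIx a ha).le (hIx b hb).le hx_lt
  have hθc_lt : θc b < θc a := by
    simpa only [hθc] using strictAntiOn_elevationAngle hH (hIx a ha) (hIx b hb) hx_lt
  have hqc_lt : qc b < qc a := by
    simpa only [hqc] using strictMono_losProbability hψ hζ hθc_lt
  have hqc_le (q : ℝ) : qc q ≤ 1 := by rw [hqc]; exact (losProbability_lt_one hψ ζ _).le
  have hh_lt : h b < h a := by
    simpa only [hh] using channelGain_lt hK₀ hα hη₁ hη hd_pos hd_lt hqc_lt (hqc_le a)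
  have hh_nonneg : 0 ≤ h b := by
    rw [hh]
    exact div_nonneg (rpow_nonneg (mul_pos hK₀ (hd_pos.trans hd_lt)).le _)
      (excessLoss_pos hη₁ hη (hqc_le b)).le
  simpa only [hr] using strictMonoOn_rate hp hB hN₀ hh_nonneg (hh_nonneg.trans hh_lt.le) hh_lt

/-- Lemma 2 of the paper: the uplink transmission rate `r(q)`, evaluated at the
Proposition-1-optimal UAV position corresponding to a uniform successful sensing
probability `q`, is strictly decreasing in `q` on any interval `I ⊆ (0,1)` on which the
sensing elevation angle lies in `(0°, 90°)` and the horizontal offset `x(q)` is positive. -/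
theorem rate_strictly_decreasing (ψ ζ H D K₀ α η₁ η₂ p B N₀ : ℝ)
    (hψ : 0 < ψ) (hζ : 0 < ζ) (hH : 0 < H) (hD : 0 < D) (hK₀ : 0 < K₀) (hα : 0 < α)
    (hη₁ : 0 < η₁) (hη : η₁ < η₂) (hp : 0 < p) (hB : 0 < B) (hN₀ : 0 < N₀)
    (θs x d θc qc h r : ℝ → ℝ)
    (hθs : ∀ q, θs q = ψ - (1 / ζ) * (Real.log (1 / q - 1) - Real.log ψ))
    (hx : ∀ q, x q = D - H / Real.tan (θs q * Real.pi / 180))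
    (hd : ∀ q, d q = Real.sqrt ((x q) ^ 2 + H ^ 2))
    (hθc : ∀ q, θc q = (180 / Real.pi) * Real.arctan (H / x q))
    (hqc : ∀ q, qc q = 1 / (1 + ψ * Real.exp (-ζ * (θc q - ψ))))
    (hh : ∀ q, h q = (K₀ * d q) ^ (-α) / (η₁ * qc q + η₂ * (1 - qc q)))
    (hr : ∀ q, r q = B * Real.log (1 + p * h q / (B * N₀)))
    (I : Set ℝ) (hI : I ⊆ Set.Ioo 0 1) (hIconn : I.OrdConnected)
    (hIθ : ∀ q ∈ I, 0 < θs q ∧ θs q < 90) (hIx : ∀ q ∈ I, 0 < x q) :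
    StrictAntiOn r I :=
  rate_strictly_decreasing_general ψ ζ H D K₀ α η₁ η₂ p B N₀ hψ hζ hH hK₀ hα hη₁ hη hp hB hN₀ θs x d
    θc qc h r hθs hx hd hθc hqc hh hr I hI hIθ hIx
end
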